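/- (Hadad, upper bound) For every prime power q there exists a nontrivial word w ∈ F_2 of word length strictly less than 10(q + 2) such that w is a law in SL_2(F_q), i.e. every group homomorphism F_2 → SL_2(F_q) sends w to the identity. -/

import Mathlib

/-!
Every `g ∈ SL₂(𝔽_q)` is annihilated by `X² - tX + 1`, `t = tr g`. If this polynomial is
irreducible, the Frobenius `x ↦ x^q` swaps its two roots in `𝔽_{q²}`, whose product is `1`, so
`g^(q+1) = 1`; if it has two distinct roots in `𝔽_q`, then `g^(q-1) = 1`; if it has a double root
`λ`, then `(X - λ)^q = X^q - λ` shows that `g^q = λ` is scalar. Hence the nested commutator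
`⁅⁅x^(q+1), y x^(q-1) y⁻¹⁆, x^q⁆` is a law in `SL₂(𝔽_q)`: in the first two cases the inner
commutator is trivial, in the third `x^q` is central. Its length is at most `10q + 8`, and it is
nontrivial because its image under `x ↦ T, y ↦ S` in `SL₂(ℤ)` is: the inner commutator has
lower-left entry `(q+1)(q-1)² ≠ 0`, so it does not commute with `T^q`.
-/

open Polynomial
open scoped MatrixGroups commutatorElement

namespace FiniteField

variable {F : Type*} [Field F] [Fintype F]

local notation "q" => Fintype.card F

theorem X_sub_C_sq_dvd_X_pow_card_sub_C (l : F) : (X - C l) ^ 2 ∣ X ^ q - C l := by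
  have h : (X - C l) ^ q = X ^ q - C l := by
    rw [← expand_card, map_sub, expand_X, expand_C]
  exact h ▸ pow_dvd_pow _ Fintype.one_lt_card

theorem X_sub_C_dvd_X_pow_card_sub_one_sub_one {l : F} (hl : l ≠ 0) :
    X - C l ∣ X ^ (q - 1) - 1 := by
  simp [dvd_iff_isRoot, pow_card_sub_one_eq_one l hl]

theorem root_pow_card_ne_root {f : F[X]} [Fact (Irreducible f)] (hf : f.natDegree ≠ 1) :
    AdjoinRoot.root f ^ q ≠ AdjoinRoot.root f := by
  intro h
  let pb := AdjoinRoot.powerBasis (Fact.out : Irreducible f).ne_zero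
  have : Module.Finite F (AdjoinRoot f) := pb.finite
  have : Finite (AdjoinRoot f) := Module.finite_of_finite F
  have hfrob : frobeniusAlgHom F (AdjoinRoot f) = 1 := AdjoinRoot.algHom_ext h
  have hord := orderOf_frobeniusAlgHom F (AdjoinRoot f)
  rw [hfrob, orderOf_one, pb.finrank, AdjoinRoot.powerBasis_dim] at hord
  exact hf hord.symm

omit [Fintype F] in
theorem natDegree_X_sq_sub_C_mul_X_add_one (t : F) :
    (X ^ 2 - C t * X + 1 : F[X]).natDegree = 2 := by
  compute_degree!

theorem quadratic_dvd_X_pow_card_add_one_sub_one {t : F}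
    (hirr : Irreducible (X ^ 2 - C t * X + 1 : F[X])) :
    X ^ 2 - C t * X + 1 ∣ X ^ (q + 1) - 1 := by
  set χ : F[X] := X ^ 2 - C t * X + 1
  have : Fact (Irreducible χ) := ⟨hirr⟩
  set r := AdjoinRoot.root χ
  set t' := algebraMap F (AdjoinRoot χ) t
  have hr : r ^ 2 - t' * r + 1 = 0 := by
    simpa [χ, t'] using AdjoinRoot.eval₂_root χ
  have hs : (r ^ q) ^ 2 - t' * r ^ q + 1 = 0 := by
    have h := congrArg (frobeniusAlgHom F (AdjoinRoot χ)) hr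
    simp only [map_add, map_sub, map_mul, map_pow, map_one, map_zero, t', AlgHom.commutes] at h
    rwa [coe_frobeniusAlgHom] at h
  have hne : r ≠ r ^ q :=
    (root_pow_card_ne_root (by rw [natDegree_X_sq_sub_C_mul_X_add_one]; simp)).symm
  have hsum : r + r ^ q = t' := by
    have : (r - r ^ q) * (r + r ^ q - t') = 0 := by linear_combination hr - hs
    exact sub_eq_zero.mp ((mul_eq_zero.mp this).resolve_left (sub_ne_zero.mpr hne))
  rw [← AdjoinRoot.mk_eq_zero, map_sub, map_pow, AdjoinRoot.mk_X, map_one, sub_eq_zero]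
  linear_combination r * hsum - hr

theorem quadratic_dvd_trichotomy (t : F) :
    X ^ 2 - C t * X + 1 ∣ X ^ (q + 1) - 1 ∨ X ^ 2 - C t * X + 1 ∣ X ^ (q - 1) - 1 ∨
      ∃ c : F, X ^ 2 - C t * X + 1 ∣ X ^ q - C c := by
  by_cases hroot : ∃ l, IsRoot (X ^ 2 - C t * X + 1) l
  · obtain ⟨l, hl⟩ := hroot
    simp only [IsRoot, eval_add, eval_sub, eval_pow, eval_mul, eval_X, eval_C, eval_one] at hl
    have hl0 : l ≠ 0 := by rintro rfl; simp at hl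
    have hfac : X ^ 2 - C t * X + 1 = (X - C l) * (X - C l⁻¹) := by
      have ht : t = l + l⁻¹ := by field_simp; linear_combination -hl
      have h1 : C l * C l⁻¹ = (1 : F[X]) := by rw [← C_mul, mul_inv_cancel₀ hl0, C_1]
      rw [ht, C_add]
      linear_combination -h1
    rw [hfac]
    by_cases hll : l = l⁻¹
    · exact .inr <| .inr ⟨l, hll ▸ sq (X - C l) ▸ X_sub_C_sq_dvd_X_pow_card_sub_C l⟩
    · refine .inr <| .inl <| IsCoprime.mul_dvd ?_ (X_sub_C_dvd_X_pow_card_sub_one_sub_one hl0)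
        (X_sub_C_dvd_X_pow_card_sub_one_sub_one (inv_ne_zero hl0))
      exact isCoprime_X_sub_C_of_isUnit_sub (sub_ne_zero.mpr hll).isUnit
  · refine .inl <| quadratic_dvd_X_pow_card_add_one_sub_one <|
      irreducible_of_degree_le_three_of_not_isRoot ?_ (not_exists.mp hroot)
    simp [natDegree_X_sq_sub_C_mul_X_add_one]

end FiniteField

theorem pow_eq_algebraMap_of_aeval_eq_zero_of_dvd {R A : Type*} [CommRing R] [Ring A]
    [Algebra R A] {a : A} {p : R[X]} (hp : aeval a p = 0) {n : ℕ} {c : R}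
    (hdvd : p ∣ X ^ n - C c) : a ^ n = algebraMap R A c := by
  obtain ⟨g, hg⟩ := hdvd
  simpa [hp, sub_eq_zero] using congrArg (aeval a) hg

namespace Matrix.SpecialLinearGroup

theorem aeval_quadratic_trace_eq_zero {R : Type*} [CommRing R] [Nontrivial R] (g : SL(2, R)) :
    aeval (g : Matrix (Fin 2) (Fin 2) R) (X ^ 2 - C (g : Matrix (Fin 2) (Fin 2) R).trace * X + 1)
      = 0 := by
  simpa [charpoly_fin_two, g.det_coe] using aeval_self_charpoly (g : Matrix (Fin 2) (Fin 2) R)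

theorem pow_card_trichotomy {F : Type*} [Field F] [Fintype F] (g : SL(2, F)) :
    g ^ (Fintype.card F + 1) = 1 ∨ g ^ (Fintype.card F - 1) = 1 ∨
      g ^ Fintype.card F ∈ Subgroup.center SL(2, F) := by
  have hg := aeval_quadratic_trace_eq_zero g
  rcases FiniteField.quadratic_dvd_trichotomy (g : Matrix (Fin 2) (Fin 2) F).trace
    with h | h | ⟨c, h⟩
  · exact .inl <| Subtype.ext <| by
      simpa using pow_eq_algebraMap_of_aeval_eq_zero_of_dvd hg (c := 1) (by rwa [C_1])
  · exact .inr <| .inl <| Subtype.ext <| by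
      simpa using pow_eq_algebraMap_of_aeval_eq_zero_of_dvd hg (c := 1) (by rwa [C_1])
  · refine .inr <| .inr ?_
    have hc := pow_eq_algebraMap_of_aeval_eq_zero_of_dvd hg h
    refine Subgroup.mem_center_iff.mpr fun k => Subtype.ext ?_
    simp only [coe_mul, coe_pow, hc, Algebra.commutes]

end Matrix.SpecialLinearGroup

section HadadWord

variable {G H : Type*} [Group G] [Group H]

def hadadWord (x y : G) (a b c : ℕ) : G :=
  ⁅⁅x ^ a, y * x ^ b * y⁻¹⁆, x ^ c⁆

theorem map_hadadWord (f : G →* H) (x y : G) (a b c : ℕ) :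
    f (hadadWord x y a b c) = hadadWord (f x) (f y) a b c := by
  simp [hadadWord, map_commutatorElement]

theorem hadadWord_eq_one {a b c : ℕ}
    (h : ∀ g : G, g ^ a = 1 ∨ g ^ b = 1 ∨ g ^ c ∈ Subgroup.center G) (x y : G) :
    hadadWord x y a b c = 1 := by
  rw [hadadWord, commutatorElement_eq_one_iff_commute]
  rcases h x with h | h | h
  · simp [h]
  · simp [h]
  · exact Subgroup.mem_center_iff.mp h _

end HadadWord

namespace FreeGroup

variable {α : Type*} [DecidableEq α]

theorem norm_commutatorElement_le (g h : FreeGroup α) :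
    norm ⁅g, h⁆ ≤ 2 * (norm g + norm h) := by
  have h₁ := norm_mul_le (g * h * g⁻¹) h⁻¹
  have h₂ := norm_mul_le (g * h) g⁻¹
  have h₃ := norm_mul_le g h
  rw [norm_inv_eq] at h₁ h₂
  rw [commutatorElement_def]
  omega

theorem norm_hadadWord_le (i j : α) (a b c : ℕ) :
    norm (hadadWord (of i) (of j) a b c) ≤ 4 * (a + b + 2) + 2 * c := by
  have h₁ := norm_mul_le (of j * of i ^ b) (of j)⁻¹
  have h₂ := norm_mul_le (of j) (of i ^ b)
  have h₃ := norm_commutatorElement_le (of i ^ a) (of j * of i ^ b * (of j)⁻¹)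
  have h₄ := norm_commutatorElement_le ⁅of i ^ a, of j * of i ^ b * (of j)⁻¹⁆ (of i ^ c)
  simp only [norm_inv_eq, norm_of, norm_of_pow] at h₁ h₂ h₃ h₄
  rw [hadadWord]
  omega

end FreeGroup

namespace ModularGroup

theorem coe_T_pow (n : ℕ) :
    ((T ^ n : SL(2, ℤ)) : Matrix (Fin 2) (Fin 2) ℤ) = !![1, (n : ℤ); 0, 1] := by
  simpa using coe_T_zpow n

theorem commutator_T_pow_conj_S_apply_one_zero (a b : ℕ) :
    (⁅T ^ a, S * T ^ b * S⁻¹⁆ : SL(2, ℤ)) 1 0 = a * b ^ 2 := by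
  simp only [commutatorElement_def, Matrix.SpecialLinearGroup.coe_mul,
    Matrix.SpecialLinearGroup.coe_inv, coe_T_pow, coe_S, Matrix.adjugate_fin_two,
    Matrix.mul_fin_two, Matrix.of_apply, Matrix.cons_val', Matrix.cons_val_zero, Matrix.cons_val_one,
    Matrix.cons_val_fin_one]
  ring

theorem apply_one_zero_eq_zero_of_commute_T_pow {g : SL(2, ℤ)} {n : ℕ} (hn : n ≠ 0)
    (h : Commute g (T ^ n)) : g 1 0 = 0 := by
  have h₀₀ := congrArg (fun k : SL(2, ℤ) => k 0 0) h
  simp only [Matrix.SpecialLinearGroup.coe_mul, coe_T_pow, Matrix.mul_apply, Fin.sum_univ_two,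
    Matrix.of_apply, Matrix.cons_val', Matrix.cons_val_zero, Matrix.cons_val_one,
    Matrix.cons_val_fin_one] at h₀₀
  have h : (n : ℤ) * g 1 0 = 0 := by linear_combination -h₀₀
  exact (mul_eq_zero.mp h).resolve_left (Int.natCast_ne_zero.mpr hn)

theorem hadadWord_T_S_ne_one {a b c : ℕ} (ha : a ≠ 0) (hb : b ≠ 0) (hc : c ≠ 0) :
    hadadWord T S a b c ≠ 1 := by
  rw [hadadWord, Ne, commutatorElement_eq_one_iff_commute]
  intro h
  have h₁₀ := apply_one_zero_eq_zero_of_commute_T_pow hc h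
  rw [commutator_T_pow_conj_S_apply_one_zero] at h₁₀
  simp [ha, hb] at h₁₀

end ModularGroup

/-- (Hadad, upper bound) For every finite field `F` (of cardinality `q`, a prime power)
there is a nontrivial word `w` in the free group on two generators of length strictly
less than `10(q + 2)` which is a law in `SL₂(F)`. -/
theorem stmt_9 (F : Type) [Field F] [Fintype F] :
    ∃ w : FreeGroup (Fin 2), w ≠ 1 ∧
      (FreeGroup.toWord w).length < 10 * (Fintype.card F + 2) ∧
      ∀ φ : FreeGroup (Fin 2) →* Matrix.SpecialLinearGroup (Fin 2) F, φ w = 1 := by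
  set q := Fintype.card F
  have hq : 2 ≤ q := Fintype.one_lt_card
  refine ⟨hadadWord (.of 0) (.of 1) (q + 1) (q - 1) q, fun h => ?_, ?_, fun φ => ?_⟩
  · refine ModularGroup.hadadWord_T_S_ne_one (a := q + 1) (b := q - 1) (c := q)
      (by omega) (by omega) (by omega) ?_
    simpa [map_hadadWord] using congrArg (FreeGroup.lift ![ModularGroup.T, ModularGroup.S]) h
  · exact (FreeGroup.norm_hadadWord_le _ _ _ _ _).trans_lt (by omega)
  · rw [map_hadadWord]
    exact hadadWord_eq_one Matrix.SpecialLinearGroup.pow_card_trichotomy _ _
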